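/- Let Σ be an alphabet with at least 3 letters and let m, n, k be integers with 1 ≤ m < n and 0 ≤ k ≤ m + n, k ≠ 1. Then there exist strings x, y over Σ with |x| = m, |y| = n, and h(xy, yx) = k; moreover one can take x to consist of a single repeated letter. -/

import Mathlib

/-!
Take `x = a^m`. Prepending `a`s to `y` does not change `h(a^m y, y a^m)`, so it suffices to find a
short `y` for each `k`. For `2m ≤ k`, the word `y = b^m c^m b^m ⋯` of length `k - m ≥ m` makes
`a^m y` and `y a^m` differ at every position. For `k = 2j < 2m` take `y = b^j`, and for
`k = 2j + 1 < 2m` take `y = b a^(m-j) c^j`.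
-/

/-- Hamming distance between two lists (of equal length): number of
positions where they differ. -/
def hdist {α : Type*} [DecidableEq α] (u v : List α) : ℕ :=
  ((u.zip v).filter (fun p => decide (p.1 ≠ p.2))).length

open List

section

variable {α : Type*}

/-- The word `b^m c^m b^m c^m ⋯` cut to length `n`. -/
def alternatingBlocks (b c : α) (m n : ℕ) : List α :=
  (range n).map fun j => if Even (j / m) then b else c

@[simp]
theorem length_alternatingBlocks (b c : α) (m n : ℕ) :
    (alternatingBlocks b c m n).length = n := by
  simp [alternatingBlocks]

variable [DecidableEq α]

theorem hdist_append {u₁ u₂ v₁ v₂ : List α} (h : u₁.length = v₁.length) :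
    hdist (u₁ ++ u₂) (v₁ ++ v₂) = hdist u₁ v₁ + hdist u₂ v₂ := by
  simp only [hdist, zip_append h, filter_append, length_append]

@[simp]
theorem hdist_self (u : List α) : hdist u u = 0 := by
  simp only [hdist, length_eq_zero_iff, filter_eq_nil_iff]
  intro p hp
  obtain ⟨i, hi, rfl⟩ := mem_iff_getElem.1 hp
  simp

@[simp]
theorem hdist_cons_cons (x y : α) (u v : List α) :
    hdist (x :: u) (y :: v) = (if x = y then 0 else 1) + hdist u v := by
  by_cases h : x = y <;> simp [hdist, h, add_comm]

@[simp]
theorem hdist_replicate (ℓ : ℕ) (a b : α) :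
    hdist (replicate ℓ a) (replicate ℓ b) = if a = b then 0 else ℓ := by
  by_cases h : a = b <;> simp [hdist, h]

theorem hdist_eq_length {u v : List α} (hlen : u.length = v.length)
    (h : ∀ i (hi : i < u.length), u[i] ≠ v[i]) : hdist u v = u.length := by
  rw [hdist, filter_eq_self.2, length_zip, hlen, min_self]
  intro p hp
  obtain ⟨i, hi, rfl⟩ := mem_iff_getElem.1 hp
  simp only [getElem_zip]
  simpa using h i (by simp at hi; omega)

theorem hdist_append_append_comm {x y : List α} (z : List α) (h : x.length = y.length) :
    hdist (x ++ (z ++ y)) (y ++ (z ++ x)) = hdist x y + hdist y x := by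
  rw [hdist_append h, hdist_append rfl, hdist_self, zero_add]

def hdistComm (x y : List α) : ℕ :=
  hdist (x ++ y) (y ++ x)

theorem hdistComm_replicate_replicate_append (m p : ℕ) (a : α) (y : List α) :
    hdistComm (replicate m a) (replicate p a ++ y) = hdistComm (replicate m a) y := by
  rw [hdistComm, hdistComm, ← append_assoc, replicate_append_replicate, add_comm,
    ← replicate_append_replicate, append_assoc, append_assoc, hdist_append rfl,
    hdist_self, zero_add]

theorem hdistComm_replicate_length_add (r : ℕ) (a : α) (y : List α) :
    hdistComm (replicate (y.length + r) a) y =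
      hdist (replicate y.length a) y + hdist y (replicate y.length a) := by
  calc hdistComm (replicate (y.length + r) a) y
      = hdist (replicate y.length a ++ (replicate r a ++ y))
          (y ++ (replicate r a ++ replicate y.length a)) := by
        rw [hdistComm, ← append_assoc, replicate_append_replicate, replicate_append_replicate,
          add_comm r]
    _ = _ := hdist_append_append_comm _ (by simp)

theorem hdistComm_replicate_replicate {a b : α} (hab : a ≠ b) (j r : ℕ) :
    hdistComm (replicate (j + r) a) (replicate j b) = 2 * j := by
  have h := hdistComm_replicate_length_add r a (replicate j b)
  rw [length_replicate] at h
  rw [h, hdist_replicate, hdist_replicate, if_neg hab, if_neg (Ne.symm hab), two_mul]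

theorem hdistComm_replicate_cons {a b c : α} (hab : a ≠ b) (hac : a ≠ c) (hbc : b ≠ c)
    (r i : ℕ) :
    hdistComm (replicate (r + i + 1) a) (b :: (replicate r a ++ replicate (i + 1) c)) =
      2 * i + 3 := by
  have hl : replicate (r + i + 1) a ++ b :: (replicate r a ++ replicate (i + 1) c) =
      a :: (replicate r a ++ (replicate i a ++ (b :: (replicate r a ++ replicate (i + 1) c)))) := by
    rw [replicate_succ, replicate_add, cons_append, append_assoc]
  have hr : b :: (replicate r a ++ replicate (i + 1) c) ++ replicate (r + i + 1) a =
      b :: (replicate r a ++ (replicate i c ++ (c :: (replicate r a ++ replicate (i + 1) a)))) := by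
    rw [replicate_succ', add_assoc, replicate_add]
    simp only [cons_append, append_assoc, nil_append]
  rw [hdistComm, hl, hr, hdist_cons_cons, hdist_append rfl, hdist_append (by simp),
    hdist_cons_cons, hdist_append rfl]
  simp only [hdist_self, hdist_replicate, if_neg hab, if_neg hbc, if_neg hac, if_neg hac.symm]
  ring

theorem hdistComm_replicate_alternatingBlocks {a b c : α} (hab : a ≠ b) (hac : a ≠ c)
    (hbc : b ≠ c) {m n : ℕ} (hm : 0 < m) (hmn : m ≤ n) :
    hdistComm (replicate m a) (alternatingBlocks b c m n) = m + n := by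
  rw [hdistComm, hdist_eq_length (by simp [add_comm])]
  · simp
  intro i hi
  simp only [length_append, length_replicate, length_alternatingBlocks] at hi
  simp only [alternatingBlocks, getElem_append, length_replicate, length_map, length_range,
    getElem_replicate, getElem_map, getElem_range]
  -- positions `i - m` and `i` of `y` lie in consecutive `m`-blocks, hence carry `b` and `c`
  have hpar : m ≤ i → (Even (i / m) ↔ ¬Even ((i - m) / m)) := fun hmi => by
    rw [← Nat.even_add_one, Nat.div_eq_sub_div hm hmi]
  split_ifs <;> grind

theorem exists_of_hdistComm_replicate {a : α} {m n k : ℕ} {z : List α} (hz : z.length ≤ n)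
    (h : hdistComm (replicate m a) z = k) :
    ∃ x y : List α, x.length = m ∧ y.length = n ∧
      hdist (x ++ y) (y ++ x) = k ∧ ∃ a : α, x = replicate m a :=
  ⟨replicate m a, replicate (n - z.length) a ++ z, length_replicate, by simp; omega,
    by rw [← h, ← hdistComm_replicate_replicate_append m (n - z.length)]; rfl, a, rfl⟩

end

theorem hamming_realizable_lt {α : Type*} [DecidableEq α]
    (hcard : ∃ a b c : α, a ≠ b ∧ a ≠ c ∧ b ≠ c)
    (m n k : ℕ) (hm : 1 ≤ m) (hmn : m < n) (hk : k ≤ m + n) (hk1 : k ≠ 1) :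
    ∃ x y : List α, x.length = m ∧ y.length = n ∧
      hdist (x ++ y) (y ++ x) = k ∧ ∃ a : α, x = List.replicate m a := by
  obtain ⟨a, b, c, hab, hac, hbc⟩ := hcard
  rcases le_or_gt (2 * m) k with h2m | h2m
  · refine exists_of_hdistComm_replicate (a := a) (z := alternatingBlocks b c m (k - m))
      (by simp; omega) ?_
    rw [hdistComm_replicate_alternatingBlocks hab hac hbc hm (by omega)]
    omega
  rcases Nat.even_or_odd' k with ⟨j, rfl | rfl⟩
  · obtain ⟨r, rfl⟩ : ∃ r, m = j + r := ⟨m - j, by omega⟩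
    exact exists_of_hdistComm_replicate (z := replicate j b) (by simp; omega)
      (hdistComm_replicate_replicate hab j r)
  · obtain ⟨i, rfl⟩ : ∃ i, j = i + 1 := ⟨j - 1, by omega⟩
    obtain ⟨r, rfl⟩ : ∃ r, m = r + i + 1 := ⟨m - i - 1, by omega⟩
    exact exists_of_hdistComm_replicate (z := b :: (replicate r a ++ replicate (i + 1) c))
      (by simp; omega) ((hdistComm_replicate_cons hab hac hbc r i).trans (by ring))
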